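/- Let α be real and m a nonnegative integer. Define the first-order operators A_m^{III,α+1}[y](x) = x·L_m^{-α-1}(-x)·y'(x) - (m+1)·L_{m+1}^{-α-2}(-x)·y(x) and B_m^{III,α+1}[y](x) = y'(x)/L_m^{-α-1}(-x). Then for every twice-differentiable function y on an interval where L_m^{-α-1}(-x) ≠ 0, one has A_m^{III,α+1}[B_m^{III,α+1}[y]](x) + (m - α)·y(x) = x·y''(x) + (1 + α - x - 2x·(L_m^{-α-1}(-x))'/L_m^{-α-1}(-x))·y'(x) + (m - α)·y(x), i.e., -ℓ_m^{III,α} = A_m^{III,α+1}∘B_m^{III,α+1} + (m - α), where ℓ_m^{III,α}[y] = -x y'' + (-1-α+x+2x(L_m^{-α-1}(-x))'/L_m^{-α-1}(-x))·y' + (α-m)·y. -/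

import Mathlib

open Finset

/-- Generalized Laguerre polynomial `L_n^α(x) = ∑_{k=0}^n (-1)^k binom(n+α, n-k) x^k / k!`. -/
noncomputable def lag (α : ℝ) (n : ℕ) (x : ℝ) : ℝ :=
  ∑ k ∈ Finset.range (n + 1),
    (-1 : ℝ) ^ k * (∏ j ∈ Finset.range (n - k), (α + (k : ℝ) + 1 + (j : ℝ))) /
      ((Nat.factorial (n - k) : ℝ) * (Nat.factorial k : ℝ)) * x ^ k

/-- Generalized Laguerre polynomial with integer index, with the convention
`L_n^α := 0` for `n < 0`. -/
noncomputable def lagZ (α : ℝ) (n : ℤ) (x : ℝ) : ℝ :=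
  if 0 ≤ n then lag α n.toNat x else 0

/-!
By the quotient rule, `A[B[y]] = x y'' - (x L' + (m + 1) L_{m+1}^{-α-2}(-x)) y' / L` with
`L = L_m^{-α-1}(-x)`, so the factorization is equivalent to the three-term relation
`x (L_m^β(-x))' + (x + β) L_m^β(-x) = (m + 1) L_{m+1}^{β-1}(-x)` at `β = -α - 1`.
Comparing coefficients of `x^k`, that relation is a Pascal-type identity between the
coefficients of `L_m^β` and `L_{m+1}^{β-1}`.
-/

noncomputable def lagCoeff (β : ℝ) (n k : ℕ) : ℝ :=
  (-1 : ℝ) ^ k * (∏ j ∈ range (n - k), (β + (k : ℝ) + 1 + (j : ℝ))) /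
      ((Nat.factorial (n - k) : ℝ) * (Nat.factorial k : ℝ))

lemma lag_eq_sum_lagCoeff (β : ℝ) (n : ℕ) (x : ℝ) :
    lag β n x = ∑ k ∈ range (n + 1), lagCoeff β n k * x ^ k := rfl

lemma lagCoeff_zero_mul (β : ℝ) (n : ℕ) :
    β * lagCoeff β n 0 = ((n : ℝ) + 1) * lagCoeff (β - 1) (n + 1) 0 := by
  have hprod : ∏ j ∈ range (n + 1), (β - 1 + (0 : ℕ) + 1 + (j : ℝ))
      = (∏ j ∈ range n, (β + (0 : ℕ) + 1 + (j : ℝ))) * β := by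
    rw [prod_range_succ']
    push_cast
    exact congrArg₂ _ (prod_congr rfl fun j _ => by ring) (by ring)
  unfold lagCoeff
  rw [Nat.sub_zero, Nat.sub_zero, hprod, Nat.factorial_succ]
  push_cast
  field_simp

lemma lagCoeff_succ_rec (β : ℝ) {n k : ℕ} (hk : k < n) :
    ((k : ℝ) + 1 + β) * lagCoeff β n (k + 1) - lagCoeff β n k
      = ((n : ℝ) + 1) * lagCoeff (β - 1) (n + 1) (k + 1) := by
  obtain ⟨r, rfl⟩ := Nat.exists_eq_add_of_lt hk
  have hprod : ∏ j ∈ range (r + 1), (β + (k : ℝ) + 1 + (j : ℝ))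
      = (∏ j ∈ range r, (β + ((k + 1 : ℕ) : ℝ) + 1 + (j : ℝ))) * (β + k + 1) := by
    rw [prod_range_succ']
    push_cast
    exact congrArg₂ _ (prod_congr rfl fun j _ => by ring) (by ring)
  have hprod' : ∏ j ∈ range (r + 1), (β - 1 + ((k + 1 : ℕ) : ℝ) + 1 + (j : ℝ))
      = ∏ j ∈ range (r + 1), (β + (k : ℝ) + 1 + (j : ℝ)) :=
    prod_congr rfl fun j _ => by push_cast; ring
  unfold lagCoeff
  rw [show k + r + 1 - (k + 1) = r by omega, show k + r + 1 - k = r + 1 by omega,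
    show k + r + 1 + 1 - (k + 1) = r + 1 by omega, hprod', hprod,
    Nat.factorial_succ r, Nat.factorial_succ k, pow_succ]
  push_cast
  field_simp
  ring

lemma lagCoeff_self (β : ℝ) (n : ℕ) :
    -lagCoeff β n n = ((n : ℝ) + 1) * lagCoeff (β - 1) (n + 1) (n + 1) := by
  unfold lagCoeff
  rw [Nat.sub_self, Nat.sub_self, Nat.factorial_succ, pow_succ]
  push_cast
  field_simp
  ring

lemma sum_lagCoeff_recurrence (β x : ℝ) (n : ℕ) :
    ∑ k ∈ range (n + 1), lagCoeff β n k * ((k : ℝ) + β) * x ^ k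
      - ∑ k ∈ range (n + 1), lagCoeff β n k * x ^ (k + 1)
    = ((n : ℝ) + 1) * lag (β - 1) (n + 1) x := by
  have hmiddle : ∑ k ∈ range n,
      (lagCoeff β n (k + 1) * (((k + 1 : ℕ) : ℝ) + β) * x ^ (k + 1)
        - lagCoeff β n k * x ^ (k + 1))
      = ((n : ℝ) + 1) * ∑ k ∈ range n, lagCoeff (β - 1) (n + 1) (k + 1) * x ^ (k + 1) := by
    rw [mul_sum]
    refine sum_congr rfl fun k hk => ?_
    push_cast
    linear_combination x ^ (k + 1) * lagCoeff_succ_rec β (mem_range.1 hk)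
  rw [sum_sub_distrib] at hmiddle
  rw [lag_eq_sum_lagCoeff, sum_range_succ' (fun k => lagCoeff β n k * ((k : ℝ) + β) * x ^ k),
    sum_range_succ (fun k => lagCoeff β n k * x ^ (k + 1)),
    sum_range_succ (fun k => lagCoeff (β - 1) (n + 1) k * x ^ k) (n + 1),
    sum_range_succ' (fun k => lagCoeff (β - 1) (n + 1) k * x ^ k) n]
  push_cast at hmiddle ⊢
  linear_combination hmiddle + lagCoeff_zero_mul β n + x ^ (n + 1) * lagCoeff_self β n

lemma hasDerivAt_lag (β : ℝ) (n : ℕ) (x : ℝ) :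
    HasDerivAt (lag β n)
      (∑ k ∈ range (n + 1), lagCoeff β n k * ((k : ℝ) * x ^ (k - 1))) x := by
  have hlag : lag β n = fun t => ∑ k ∈ range (n + 1), lagCoeff β n k * t ^ k :=
    funext (lag_eq_sum_lagCoeff β n)
  rw [hlag]
  exact HasDerivAt.fun_sum fun k _ => (hasDerivAt_pow k x).const_mul _

lemma lag_recurrence (β : ℝ) (n : ℕ) (x : ℝ) :
    x * deriv (lag β n) x + (β - x) * lag β n x = ((n : ℝ) + 1) * lag (β - 1) (n + 1) x := by
  have hxD : x * deriv (lag β n) x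
      = ∑ k ∈ range (n + 1), lagCoeff β n k * (k : ℝ) * x ^ k := by
    rw [(hasDerivAt_lag β n x).deriv, mul_sum]
    refine sum_congr rfl fun k _ => ?_
    rcases k with _ | k
    · simp
    · rw [Nat.add_sub_cancel, pow_succ]; ring
  rw [← sum_lagCoeff_recurrence, hxD, lag_eq_sum_lagCoeff, mul_sum, ← sum_add_distrib,
    ← sum_sub_distrib]
  exact sum_congr rfl fun k _ => by ring

lemma lag_neg_recurrence (β : ℝ) (n : ℕ) (x : ℝ) :
    x * deriv (fun t => lag β n (-t)) x + (x + β) * lag β n (-x)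
      = ((n : ℝ) + 1) * lag (β - 1) (n + 1) (-x) := by
  rw [deriv_comp_neg, ← lag_recurrence]
  ring

theorem typeIII_factorization_general (α : ℝ) (m : ℕ) (s : Set ℝ)
    (hL : ∀ t ∈ s, lag (-α - 1) m (-t) ≠ 0)
    (y : ℝ → ℝ)
    (hy' : ∀ t ∈ s, DifferentiableAt ℝ (deriv y) t)
    (x : ℝ) (hx : x ∈ s) :
    x * lag (-α - 1) m (-x) * deriv (fun t => deriv y t / lag (-α - 1) m (-t)) x
        - ((m : ℝ) + 1) * lag (-α - 2) (m + 1) (-x) * (deriv y x / lag (-α - 1) m (-x))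
        + ((m : ℝ) - α) * y x
      = x * deriv (deriv y) x
        + (1 + α - x
            - 2 * x * (deriv (fun t => lag (-α - 1) m (-t)) x / lag (-α - 1) m (-x)))
            * deriv y x
        + ((m : ℝ) - α) * y x := by
  have hrec := lag_neg_recurrence (-α - 1) m x
  rw [show -α - 1 - 1 = -α - 2 by ring] at hrec
  have hdiff : DifferentiableAt ℝ (fun t => lag (-α - 1) m (-t)) x :=
    differentiableAt_comp_neg.2 (hasDerivAt_lag _ _ _).differentiableAt
  have hL0 := hL x hx
  rw [deriv_fun_div (hy' x hx) hdiff hL0, ← hrec]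
  field_simp
  ring

/-- the factorization `-ℓ_m^{III,α} = A_m^{III,α+1} ∘ B_m^{III,α+1} + (m-α)`,
where `A_m^{III,α+1}[y](x) = x L_m^{-α-1}(-x) y'(x) - (m+1) L_{m+1}^{-α-2}(-x) y(x)` and
`B_m^{III,α+1}[y](x) = y'(x)/L_m^{-α-1}(-x)`, on an open set where `L_m^{-α-1}(-x) ≠ 0`. -/
theorem typeIII_factorization (α : ℝ) (m : ℕ) (s : Set ℝ) (hs : IsOpen s)
    (hL : ∀ t ∈ s, lag (-α - 1) m (-t) ≠ 0)
    (y : ℝ → ℝ)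
    (hy : ∀ t ∈ s, DifferentiableAt ℝ y t)
    (hy' : ∀ t ∈ s, DifferentiableAt ℝ (deriv y) t)
    (x : ℝ) (hx : x ∈ s) :
    x * lag (-α - 1) m (-x) * deriv (fun t => deriv y t / lag (-α - 1) m (-t)) x
        - ((m : ℝ) + 1) * lag (-α - 2) (m + 1) (-x) * (deriv y x / lag (-α - 1) m (-x))
        + ((m : ℝ) - α) * y x
      = x * deriv (deriv y) x
        + (1 + α - x
            - 2 * x * (deriv (fun t => lag (-α - 1) m (-t)) x / lag (-α - 1) m (-x)))
            * deriv y x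
        + ((m : ℝ) - α) * y x :=
  typeIII_factorization_general α m s hL y hy' x hx
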